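/- For all positive integers p, n and h, the number m_{n,h}^{(p)} of p-watermelons of length 2n with height < h (and no restriction on the depth) equals the p×p determinant det_{0≤i,j<p}( C(2n, n+i−j) − C(2n, n+h−i−j) ), where C(a,b) denotes the binomial coefficient (taken to be 0 when b < 0 or b > a). -/

import Mathlib

open scoped BigOperators
open Filter

/-- Binomial coefficient with integer lower argument, `0` outside range. -/
def ichoose (a : ℕ) (b : ℤ) : ℕ := if 0 ≤ b then a.choose b.toNat else 0

/-- A `p`-watermelon of length `2n` (no wall): the `i`-th branch starts at `(0,2i)`,
ends at `(2n,2i)`, takes steps `(1,1)` or `(1,-1)`, and no two branches share a point.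
`y i t` is the ordinate of the `i`-th branch at abscissa `t`. -/
def IsMelon (p n : ℕ) (y : Fin p → Fin (2*n+1) → ℤ) : Prop :=
  (∀ i, y i 0 = 2 * (i : ℤ)) ∧
  (∀ i, y i (Fin.last (2*n)) = 2 * (i : ℤ)) ∧
  (∀ i (t : Fin (2*n)), y i t.succ - y i t.castSucc = 1 ∨ y i t.succ - y i t.castSucc = -1) ∧
  (∀ i j, i ≠ j → ∀ t, y i t ≠ y j t)

/-- The height of a watermelon: the maximal ordinate reached (by its top-most branch). -/
noncomputable def melonHeight {p n : ℕ} (y : Fin p → Fin (2*n+1) → ℤ) : ℤ :=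
  sSup {v | ∃ i t, y i t = v}

/-- The depth of a watermelon: the minimal ordinate reached (by its bottom-most branch). -/
noncomputable def melonDepth {p n : ℕ} (y : Fin p → Fin (2*n+1) → ℤ) : ℤ :=
  sInf {v | ∃ i t, y i t = v}

/-- The range of a watermelon: height minus depth. -/
noncomputable def melonRange {p n : ℕ} (y : Fin p → Fin (2*n+1) → ℤ) : ℤ :=
  melonHeight y - melonDepth y

/-!
Encode each branch by its sequence of up/down steps. For starting points `2i` and end points
`2j`, the Lindström–Gessel–Viennot argument shows that the determinant of the single-path counts
`N(2i → 2j)` (paths staying below `h`) counts the non-intersecting families: swapping the tails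
of the first two branches to meet is a sign-reversing involution on the intersecting ones, and
since all starting points have the same parity, non-intersecting branches keep their order and
hence connect `2i` to `2i`. By André's reflection, the paths from `2i` to `2j` that touch `h`
correspond to all paths from `2h - 2i` to `2j`, which gives
`N(2i → 2j) = C(2n, n+i-j) - C(2n, n+h-i-j)`.
If `h ≤ 2p - 2`, the top branch does not fit and rows `⌊h/2⌋` and `⌈h/2⌉` of the matrix are
opposite, so both sides vanish.
-/

open Finset

namespace Watermelon

open scoped Classical

section Walk

variable {m : ℕ}

/-- A path of length `m` is its sequence of steps (`true` for up); `walk s t` is its height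
after `t` steps relative to its start, frozen from time `m` on. -/
def stepAt (s : Fin m → Bool) (k : ℕ) : ℤ :=
  if hk : k < m then (if s ⟨k, hk⟩ then 1 else -1) else 0

def walk (s : Fin m → Bool) (t : ℕ) : ℤ := ∑ k ∈ range t, stepAt s k

@[simp] lemma walk_zero (s : Fin m → Bool) : walk s 0 = 0 := rfl

lemma walk_succ (s : Fin m → Bool) (t : ℕ) : walk s (t + 1) = walk s t + stepAt s t :=
  sum_range_succ _ _

lemma stepAt_bounds (s : Fin m → Bool) (k : ℕ) : -1 ≤ stepAt s k ∧ stepAt s k ≤ 1 := by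
  unfold stepAt; split_ifs <;> norm_num

lemma two_dvd_stepAt_sub (s s' : Fin m → Bool) (k : ℕ) : 2 ∣ stepAt s k - stepAt s' k := by
  unfold stepAt; split_ifs <;> norm_num

lemma two_dvd_walk_sub (s s' : Fin m → Bool) (t : ℕ) : 2 ∣ walk s t - walk s' t := by
  rw [walk, walk, ← sum_sub_distrib]
  exact dvd_sum fun k _ => two_dvd_stepAt_sub s s' k

lemma walk_succ_le (s : Fin m → Bool) (t : ℕ) : walk s (t + 1) ≤ walk s t + 1 := by
  linarith [walk_succ s t, stepAt_bounds s t]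

lemma walk_le_succ (s : Fin m → Bool) (t : ℕ) : walk s t ≤ walk s (t + 1) + 1 := by
  linarith [walk_succ s t, stepAt_bounds s t]

lemma walk_eq_sub_two_mul_card (s : Fin m → Bool) :
    walk s m = m - 2 * #{k | s k = false} := by
  have hstep : ∀ k : Fin m, stepAt s k = 1 - 2 * (if s k = false then 1 else 0) := by
    intro k; cases hk : s k <;> simp [stepAt, hk]
  rw [walk, ← Fin.sum_univ_eq_sum_range, sum_congr rfl fun k _ => hstep k, sum_sub_distrib,
    ← mul_sum, sum_boole]
  simp

lemma card_walk_eq_ichoose (d : ℤ) :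
    Fintype.card {s : Fin m → Bool // walk s m = m - 2 * d} = ichoose m d := by
  have hcount : ∀ s : Fin m → Bool, walk s m = m - 2 * d ↔ (#{k | s k = false} : ℤ) = d := by
    intro s; rw [walk_eq_sub_two_mul_card]; omega
  simp only [hcount]
  rcases lt_or_ge d 0 with hd | hd
  · rw [ichoose, if_neg hd.not_ge, Fintype.card_eq_zero_iff]
    exact ⟨fun s => by omega⟩
  · lift d to ℕ using hd
    rw [ichoose, if_pos (Int.natCast_nonneg d), Int.toNat_natCast,
      ← Fintype.card_fin m, ← Fintype.card_finset_len, Fintype.card_fin]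
    simp only [Nat.cast_inj]
    refine Fintype.card_congr ⟨fun s => ⟨({k | s.1 k = false} : Finset (Fin m)), s.2⟩,
      fun D => ⟨fun k => decide (k ∉ D.1), ?_⟩, ?_, ?_⟩
    · simpa using D.2
    · rintro ⟨s, -⟩; ext k; simp
    · rintro ⟨D, -⟩; ext k; simp

def splice (τ : ℕ) (s s' : Fin m → Bool) : Fin m → Bool :=
  fun k => if (k : ℕ) < τ then s k else s' k

lemma walk_splice (τ : ℕ) (s s' : Fin m → Bool) (t : ℕ) :
    walk (splice τ s s') t = walk s (min t τ) + (walk s' t - walk s' (min t τ)) := by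
  induction t with
  | zero => simp
  | succ t ih =>
    have hstep : stepAt (splice τ s s') t = if t < τ then stepAt s t else stepAt s' t := by
      unfold stepAt splice; split_ifs <;> simp_all
    rw [walk_succ, ih, hstep]
    rcases lt_or_ge t τ with ht | ht
    · rw [if_pos ht, min_eq_left ht.le, min_eq_left ht, walk_succ]; ring
    · rw [if_neg ht.not_gt, min_eq_right ht, min_eq_right (by omega), walk_succ]; ring

lemma walk_not (s : Fin m → Bool) (t : ℕ) : walk (fun k => !s k) t = -walk s t := by
  rw [walk, walk, ← sum_neg_distrib]
  refine sum_congr rfl fun k _ => ?_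
  unfold stepAt; split_ifs <;> simp_all

end Walk

theorem exists_eq_of_succ_le_add_one {f : ℕ → ℤ} (hf : ∀ t, f (t + 1) ≤ f t + 1) {T : ℕ} {c : ℤ}
    (h0 : f 0 ≤ c) (hT : c ≤ f T) : ∃ t ≤ T, f t = c := by
  induction T with
  | zero => exact ⟨0, le_rfl, le_antisymm h0 hT⟩
  | succ T ih =>
    by_cases hc : c ≤ f T
    · obtain ⟨t, ht, rfl⟩ := ih hc
      exact ⟨t, by omega, rfl⟩
    · exact ⟨T + 1, le_rfl, by linarith [hf T]⟩

section Reflection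

variable {m : ℕ}

def Hits (h a : ℤ) (s : Fin m → Bool) : Prop := ∃ t ≤ m, a + walk s t = h

def StaysBelow (h a : ℤ) (s : Fin m → Bool) : Prop := ∀ t ≤ m, a + walk s t < h

lemma staysBelow_iff_not_hits {h a : ℤ} (ha : a < h) (s : Fin m → Bool) :
    StaysBelow h a s ↔ ¬ Hits h a s := by
  refine ⟨fun hs ⟨t, htm, ht⟩ => (hs t htm).ne ht, fun hs t htm => not_le.1 fun ht => hs ?_⟩
  obtain ⟨u, hu, hfu⟩ := exists_eq_of_succ_le_add_one (f := fun t => a + walk s t)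
    (fun t => by linarith [walk_succ_le s t]) (by simpa using ha.le) ht
  exact ⟨u, hu.trans htm, hfu⟩

lemma hits_of_le_of_walk_le {h a : ℤ} {s : Fin m → Bool} (ha : h ≤ a) (hend : a + walk s m ≤ h) :
    Hits h a s := by
  obtain ⟨u, hu, hfu⟩ := exists_eq_of_succ_le_add_one (f := fun t => -(a + walk s t))
    (fun t => by linarith [walk_le_succ s t]) (T := m) (c := -h) (by simpa using ha)
    (by simpa using hend)
  exact ⟨u, hu, by linarith⟩

noncomputable def hitTime (h a : ℤ) (s : Fin m → Bool) : ℕ := sInf {t | a + walk s t = h}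

lemma hitTime_le {h a : ℤ} {s : Fin m → Bool} (hs : Hits h a s) : hitTime h a s ≤ m :=
  let ⟨_, htm, ht⟩ := hs; (Nat.sInf_le ht).trans htm

lemma walk_hitTime {h a : ℤ} {s : Fin m → Bool} (hs : Hits h a s) :
    a + walk s (hitTime h a s) = h :=
  let ⟨t, _, ht⟩ := hs; Nat.sInf_mem (s := {t | a + walk s t = h}) ⟨t, ht⟩

lemma walk_ne_of_lt_hitTime {h a : ℤ} {s : Fin m → Bool} {t : ℕ} (ht : t < hitTime h a s) :
    a + walk s t ≠ h :=
  Nat.notMem_of_lt_sInf ht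

/-- André's reflection of a path from `a`: flipping its steps before the first visit to `h`
gives a path from `2 * h - a`. -/
noncomputable def reflect (h a : ℤ) (s : Fin m → Bool) : Fin m → Bool :=
  splice (hitTime h a s) (fun k => !s k) s

lemma walk_reflect_of_le {h a : ℤ} {s : Fin m → Bool} {t : ℕ} (ht : t ≤ hitTime h a s) :
    2 * h - a + walk (reflect h a s) t = 2 * h - (a + walk s t) := by
  rw [reflect, walk_splice, min_eq_left ht, walk_not]; ring

lemma walk_reflect_of_ge {h a : ℤ} {s : Fin m → Bool} (hs : Hits h a s) {t : ℕ}
    (ht : hitTime h a s ≤ t) : 2 * h - a + walk (reflect h a s) t = a + walk s t := by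
  rw [reflect, walk_splice, min_eq_right ht, walk_not]; linarith [walk_hitTime hs]

lemma hitTime_reflect {h a : ℤ} {s : Fin m → Bool} (hs : Hits h a s) :
    hitTime h (2 * h - a) (reflect h a s) = hitTime h a s := by
  have hmem : 2 * h - a + walk (reflect h a s) (hitTime h a s) = h := by
    rw [walk_reflect_of_ge hs le_rfl, walk_hitTime hs]
  refine le_antisymm (Nat.sInf_le hmem) (le_csInf ⟨_, hmem⟩ fun t ht => not_lt.1 fun hlt => ?_)
  have ht : 2 * h - a + walk (reflect h a s) t = h := ht
  rw [walk_reflect_of_le hlt.le] at ht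
  exact walk_ne_of_lt_hitTime hlt (by linarith)

lemma hits_reflect {h a : ℤ} {s : Fin m → Bool} (hs : Hits h a s) :
    Hits h (2 * h - a) (reflect h a s) :=
  ⟨hitTime h a s, hitTime_le hs, by rw [walk_reflect_of_ge hs le_rfl, walk_hitTime hs]⟩

lemma reflect_reflect {h a : ℤ} {s : Fin m → Bool} (hs : Hits h a s) :
    reflect h (2 * h - a) (reflect h a s) = s := by
  funext k
  rw [reflect, hitTime_reflect hs]
  unfold reflect splice
  split_ifs <;> simp_all

lemma card_hits_le_card_hits_reflect (h a b : ℤ) :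
    Fintype.card {s : Fin m → Bool // a + walk s m = b ∧ Hits h a s} ≤
      Fintype.card {s : Fin m → Bool // 2 * h - a + walk s m = b ∧ Hits h (2 * h - a) s} := by
  refine Fintype.card_le_of_injective (fun s => ⟨reflect h a s.1, ?_, hits_reflect s.2.2⟩) ?_
  · rw [walk_reflect_of_ge s.2.2 (hitTime_le s.2.2), s.2.1]
  · intro s s' hss'
    have hss' : reflect h a s.1 = reflect h a s'.1 := congrArg Subtype.val hss'
    exact Subtype.ext (by rw [← reflect_reflect s.2.2, hss', reflect_reflect s'.2.2])

theorem card_hits_eq_card_hits_reflect (h a b : ℤ) :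
    Fintype.card {s : Fin m → Bool // a + walk s m = b ∧ Hits h a s} =
      Fintype.card {s : Fin m → Bool // 2 * h - a + walk s m = b ∧ Hits h (2 * h - a) s} := by
  refine le_antisymm (card_hits_le_card_hits_reflect h a b) ?_
  simpa using card_hits_le_card_hits_reflect (m := m) h (2 * h - a) b

noncomputable def pathCount (m : ℕ) (a b : ℤ) : ℕ :=
  Fintype.card {s : Fin m → Bool // a + walk s m = b}

noncomputable def pathCountBelow (m : ℕ) (h a b : ℤ) : ℕ :=
  Fintype.card {s : Fin m → Bool // a + walk s m = b ∧ StaysBelow h a s}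

lemma pathCount_eq_ichoose (a d : ℤ) : pathCount m a (a + m - 2 * d) = ichoose m d := by
  rw [pathCount, ← card_walk_eq_ichoose]
  congr! 3 with s
  omega

theorem pathCountBelow_eq_pathCount_sub {h a b : ℤ} (ha : a < h) (hb : b < h) :
    (pathCountBelow m h a b : ℤ) = pathCount m a b - pathCount m (2 * h - a) b := by
  have hsplit : pathCount m a b = pathCountBelow m h a b +
      Fintype.card {s : Fin m → Bool // a + walk s m = b ∧ Hits h a s} := by
    simp only [pathCount, pathCountBelow, staysBelow_iff_not_hits ha, Fintype.card_subtype]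
    rw [← filter_filter, ← filter_filter, add_comm]
    exact (card_filter_add_card_filter_not _).symm
  have hreflected : Fintype.card {s : Fin m → Bool // 2 * h - a + walk s m = b ∧
      Hits h (2 * h - a) s} = pathCount m (2 * h - a) b :=
    Fintype.card_congr <| Equiv.subtypeEquivRight fun s =>
      and_iff_left_of_imp fun hend => hits_of_le_of_walk_le (by omega) (by omega)
  rw [hsplit, card_hits_eq_card_hits_reflect, hreflected]
  push_cast; ring

lemma pathCountBelow_eq_ichoose_sub {n : ℕ} {h i j : ℤ} (hi : 2 * i < h) (hj : 2 * j < h) :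
    (pathCountBelow (2 * n) h (2 * i) (2 * j) : ℤ) =
      ichoose (2 * n) (n + i - j) - ichoose (2 * n) (n + h - i - j) := by
  have hdirect := pathCount_eq_ichoose (m := 2 * n) (2 * i) (n + i - j)
  have hreflected := pathCount_eq_ichoose (m := 2 * n) (2 * h - 2 * i) (n + h - i - j)
  rw [show 2 * i + ((2 * n : ℕ) : ℤ) - 2 * (n + i - j) = 2 * j by push_cast; ring] at hdirect
  rw [show 2 * h - 2 * i + ((2 * n : ℕ) : ℤ) - 2 * (n + h - i - j) = 2 * j by push_cast; ring]
    at hreflected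
  rw [pathCountBelow_eq_pathCount_sub hi hj, hdirect, hreflected]

end Reflection

section Lindstrom

variable {p m : ℕ}

def Meets (a : Fin p → ℤ) (F : Fin p → Fin m → Bool) (t : ℕ) : Prop :=
  ∃ ij : Fin p × Fin p, ij.1 ≠ ij.2 ∧ a ij.1 + walk (F ij.1) t = a ij.2 + walk (F ij.2) t

def Intersects (a : Fin p → ℤ) (F : Fin p → Fin m → Bool) : Prop := ∃ t ≤ m, Meets a F t

def IsAdmissible (h : ℤ) (a b : Fin p → ℤ) (σ : Equiv.Perm (Fin p))
    (F : Fin p → Fin m → Bool) : Prop :=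
  ∀ k, a k + walk (F k) m = b (σ k) ∧ StaysBelow h (a k) (F k)

noncomputable def firstMeet (a : Fin p → ℤ) (F : Fin p → Fin m → Bool) : ℕ :=
  sInf {t | Meets a F t}

lemma firstMeet_le {a : Fin p → ℤ} {F : Fin p → Fin m → Bool} (hF : Intersects a F) :
    firstMeet a F ≤ m :=
  let ⟨_, htm, ht⟩ := hF; (Nat.sInf_le ht).trans htm

lemma meets_firstMeet {a : Fin p → ℤ} {F : Fin p → Fin m → Bool} (hF : Intersects a F) :
    Meets a F (firstMeet a F) :=
  let ⟨t, _, ht⟩ := hF; Nat.sInf_mem (s := {t | Meets a F t}) ⟨t, ht⟩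

lemma choose_eq_choose_of_eq {α : Sort*} {P Q : α → Prop} (hP : ∃ x, P x) (hQ : ∃ x, Q x)
    (h : P = Q) : hP.choose = hQ.choose := by
  subst h; rfl

/-- Any choice of the meeting pair works, provided it only depends on the positions at the
first meeting time: these are not changed by the involution. -/
noncomputable def meetingPair {a : Fin p → ℤ} {F : Fin p → Fin m → Bool} (hF : Intersects a F) :
    Fin p × Fin p :=
  Exists.choose (meets_firstMeet hF)

lemma meetingPair_spec {a : Fin p → ℤ} {F : Fin p → Fin m → Bool} (hF : Intersects a F) :
    (meetingPair hF).1 ≠ (meetingPair hF).2 ∧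
      a (meetingPair hF).1 + walk (F (meetingPair hF).1) (firstMeet a F) =
        a (meetingPair hF).2 + walk (F (meetingPair hF).2) (firstMeet a F) :=
  Exists.choose_spec (meets_firstMeet hF)

lemma firstMeet_eq_and_meetingPair_eq {a : Fin p → ℤ} {F G : Fin p → Fin m → Bool}
    (hF : Intersects a F) (hGF : ∀ k, ∀ t ≤ firstMeet a F, walk (G k) t = walk (F k) t) :
    ∃ hG : Intersects a G, firstMeet a G = firstMeet a F ∧ meetingPair hG = meetingPair hF := by
  have hmeets : ∀ t ≤ firstMeet a F, Meets a G t ↔ Meets a F t := fun t ht => by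
    simp only [Meets, hGF _ t ht]
  have hGmeets : Meets a G (firstMeet a F) := (hmeets _ le_rfl).2 (meets_firstMeet hF)
  have hG : Intersects a G := ⟨_, firstMeet_le hF, hGmeets⟩
  have htime : firstMeet a G = firstMeet a F :=
    le_antisymm (Nat.sInf_le hGmeets) (le_csInf ⟨_, hGmeets⟩ fun t ht => not_lt.1 fun hlt =>
      Nat.notMem_of_lt_sInf hlt ((hmeets t hlt.le).1 ht))
  refine ⟨hG, htime, ?_⟩
  have hpred : (fun ij : Fin p × Fin p => ij.1 ≠ ij.2 ∧
      a ij.1 + walk (G ij.1) (firstMeet a G) = a ij.2 + walk (G ij.2) (firstMeet a G)) =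
      fun ij => ij.1 ≠ ij.2 ∧
      a ij.1 + walk (F ij.1) (firstMeet a F) = a ij.2 + walk (F ij.2) (firstMeet a F) := by
    simp only [htime, hGF _ _ le_rfl]
  exact choose_eq_choose_of_eq _ _ hpred

def swapTails (τ : ℕ) (i j : Fin p) (F : Fin p → Fin m → Bool) : Fin p → Fin m → Bool :=
  fun k => splice τ (F k) (F (Equiv.swap i j k))

lemma walk_swapTails_of_le {τ t : ℕ} (ht : t ≤ τ) (i j : Fin p) (F : Fin p → Fin m → Bool)
    (k : Fin p) : walk (swapTails τ i j F k) t = walk (F k) t := by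
  rw [swapTails, walk_splice, min_eq_left ht]; ring

section MeetingAt

variable {a : Fin p → ℤ} {F : Fin p → Fin m → Bool} {τ : ℕ} {i j : Fin p}
  (hij : a i + walk (F i) τ = a j + walk (F j) τ)
include hij

lemma walk_swap_eq (k : Fin p) :
    a (Equiv.swap i j k) + walk (F (Equiv.swap i j k)) τ = a k + walk (F k) τ := by
  rcases eq_or_ne k i with rfl | hki
  · simp [hij]
  rcases eq_or_ne k j with rfl | hkj
  · simp [hij]
  rw [Equiv.swap_apply_of_ne_of_ne hki hkj]

lemma walk_swapTails_of_ge {t : ℕ} (ht : τ ≤ t) (k : Fin p) :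
    a k + walk (swapTails τ i j F k) t =
      a (Equiv.swap i j k) + walk (F (Equiv.swap i j k)) t := by
  rw [swapTails, walk_splice, min_eq_right ht]; linarith [walk_swap_eq hij k]

lemma isAdmissible_swapTails {h : ℤ} {b : Fin p → ℤ} {σ : Equiv.Perm (Fin p)}
    (hF : IsAdmissible h a b σ F) (hτ : τ ≤ m) :
    IsAdmissible h a b (σ * Equiv.swap i j) (swapTails τ i j F) := by
  refine fun k => ⟨by rw [walk_swapTails_of_ge hij hτ, (hF _).1]; rfl, fun t htm => ?_⟩
  rcases le_total t τ with ht | ht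
  · rw [walk_swapTails_of_le ht]; exact (hF k).2 t htm
  · rw [walk_swapTails_of_ge hij ht]; exact (hF _).2 t htm

end MeetingAt

lemma swapTails_swapTails (τ : ℕ) (i j : Fin p) (F : Fin p → Fin m → Bool) :
    swapTails τ i j (swapTails τ i j F) = F := by
  funext k l
  simp only [swapTails, splice, Equiv.swap_apply_self]
  split_ifs <;> rfl

noncomputable def swapAtFirstMeet {a : Fin p → ℤ} {F : Fin p → Fin m → Bool}
    (hF : Intersects a F) : Fin p → Fin m → Bool :=
  swapTails (firstMeet a F) (meetingPair hF).1 (meetingPair hF).2 F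

lemma swapAtFirstMeet_spec {a : Fin p → ℤ} {F : Fin p → Fin m → Bool} (hF : Intersects a F) :
    ∃ hG : Intersects a (swapAtFirstMeet hF), firstMeet a (swapAtFirstMeet hF) = firstMeet a F ∧
      meetingPair hG = meetingPair hF :=
  firstMeet_eq_and_meetingPair_eq hF fun k _ ht => walk_swapTails_of_le ht _ _ F k

lemma swapAtFirstMeet_swapAtFirstMeet {a : Fin p → ℤ} {F : Fin p → Fin m → Bool}
    (hF : Intersects a F) (hG : Intersects a (swapAtFirstMeet hF)) :
    swapAtFirstMeet hG = F := by
  obtain ⟨_, htime, hpair⟩ := swapAtFirstMeet_spec hF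
  rw [swapAtFirstMeet, hpair, htime]
  exact swapTails_swapTails _ _ _ F

/-- The intersecting configurations cancel in pairs: swapping the tails of the first meeting
pair is a sign-reversing involution. -/
theorem sum_sign_intersecting_eq_zero (h : ℤ) (a b : Fin p → ℤ) :
    ∑ x ∈ univ.filter (fun x : Equiv.Perm (Fin p) × (Fin p → Fin m → Bool) =>
        IsAdmissible h a b x.1 x.2 ∧ Intersects a x.2), (Equiv.Perm.sign x.1 : ℤ) = 0 := by
  have hmem : ∀ {x : Equiv.Perm (Fin p) × (Fin p → Fin m → Bool)},
      x ∈ univ.filter (fun x => IsAdmissible h a b x.1 x.2 ∧ Intersects a x.2) →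
        IsAdmissible h a b x.1 x.2 ∧ Intersects a x.2 := fun hx => (mem_filter.1 hx).2
  refine sum_involution (fun x hx => (x.1 * Equiv.swap (meetingPair (hmem hx).2).1
    (meetingPair (hmem hx).2).2, swapAtFirstMeet (hmem hx).2)) ?_ ?_ ?_ ?_
  · intro x hx
    simp [Equiv.Perm.sign_mul, Equiv.Perm.sign_swap (meetingPair_spec (hmem hx).2).1]
  · intro x hx _ hfix
    have := congrArg (fun y => y.1 (meetingPair (hmem hx).2).1) hfix
    simp only [Equiv.Perm.mul_apply, Equiv.swap_apply_left] at this
    exact (meetingPair_spec (hmem hx).2).1 (x.1.injective this).symm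
  · intro x hx
    obtain ⟨hG, -, -⟩ := swapAtFirstMeet_spec (hmem hx).2
    exact mem_filter.2 ⟨mem_univ _, isAdmissible_swapTails (meetingPair_spec (hmem hx).2).2
      (hmem hx).1 (firstMeet_le (hmem hx).2), hG⟩
  · intro x hx
    obtain ⟨hG, -, hpair⟩ := swapAtFirstMeet_spec (hmem hx).2
    refine Prod.ext ?_ (swapAtFirstMeet_swapAtFirstMeet _ _)
    dsimp only
    rw [hpair, mul_assoc, Equiv.swap_mul_self, mul_one]

/-- The gap between two paths of the same parity stays even, so they cannot cross without
meeting. -/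
lemma lt_of_forall_ne {x x' : ℤ} {s s' : Fin m → Bool} (hx : x < x') (hpar : 2 ∣ x' - x)
    {T : ℕ} (hne : ∀ t ≤ T, x + walk s t ≠ x' + walk s' t) : x + walk s T < x' + walk s' T := by
  induction T with
  | zero => simpa
  | succ T ih =>
    have hlt := ih fun t ht => hne t (by omega)
    have := two_dvd_walk_sub s s' T
    have := hne (T + 1) le_rfl
    have := walk_succ_le s T
    have := walk_le_succ s' T
    omega

theorem eq_one_of_isAdmissible_of_not_intersects {h : ℤ} {a b : Fin p → ℤ} (ha : StrictMono a)
    (hpar : ∀ i j, a i ≡ a j [ZMOD 2]) (hb : StrictMono b) {σ : Equiv.Perm (Fin p)}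
    {F : Fin p → Fin m → Bool} (hF : IsAdmissible h a b σ F) (hnF : ¬ Intersects a F) :
    σ = 1 := by
  have hmono : StrictMono σ := fun i j hij => hb.lt_iff_lt.1 <| by
    rw [← (hF i).1, ← (hF j).1]
    exact lt_of_forall_ne (ha hij) (hpar i j).dvd fun t ht he => hnF ⟨t, ht, (i, j), hij.ne, he⟩
  exact Equiv.ext fun i => hmono.apply_eq

lemma card_isAdmissible (h : ℤ) (a b : Fin p → ℤ) (σ : Equiv.Perm (Fin p)) :
    Fintype.card {F : Fin p → Fin m → Bool // IsAdmissible h a b σ F} =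
      ∏ k, pathCountBelow m h (a k) (b (σ k)) := by
  simp only [pathCountBelow]
  rw [← Fintype.card_pi]
  exact Fintype.card_eq.2 ⟨Equiv.subtypePiEquivPi (p := fun k s =>
    a k + walk s m = b (σ k) ∧ StaysBelow h (a k) s)⟩

/-- The Lindström–Gessel–Viennot lemma for nonintersecting paths below height `h`. -/
theorem det_pathCountBelow (h : ℤ) {a b : Fin p → ℤ} (ha : StrictMono a)
    (hpar : ∀ i j, a i ≡ a j [ZMOD 2]) (hb : StrictMono b) :
    (Matrix.of fun i j => (pathCountBelow m h (a i) (b j) : ℤ)).det =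
      Fintype.card {F : Fin p → Fin m → Bool // IsAdmissible h a b 1 F ∧ ¬ Intersects a F} := by
  set ε : Equiv.Perm (Fin p) → ℤ := fun σ => Equiv.Perm.sign σ
  have hsplit : ∀ σ (F : Fin p → Fin m → Bool), (if IsAdmissible h a b σ F then ε σ else 0) =
      (if IsAdmissible h a b σ F ∧ Intersects a F then ε σ else 0) +
        if IsAdmissible h a b σ F ∧ ¬ Intersects a F then ε σ else 0 := by
    intro σ F; split_ifs <;> simp_all
  have hnonint : ∑ σ, ∑ F : Fin p → Fin m → Bool,
      (if IsAdmissible h a b σ F ∧ ¬ Intersects a F then ε σ else 0) =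
        Fintype.card {F : Fin p → Fin m → Bool // IsAdmissible h a b 1 F ∧ ¬ Intersects a F} := by
    rw [sum_eq_single 1 (fun σ _ hσ => sum_eq_zero fun F _ => if_neg fun hF =>
      hσ (eq_one_of_isAdmissible_of_not_intersects ha hpar hb hF.1 hF.2)) (by simp),
      Fintype.card_subtype, natCast_card_filter]
    simp [ε]
  calc (Matrix.of fun i j => (pathCountBelow m h (a i) (b j) : ℤ)).det
      = ∑ σ, ε σ * Fintype.card {F : Fin p → Fin m → Bool // IsAdmissible h a b σ F} := by
        rw [← Matrix.det_transpose, Matrix.det_apply']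
        refine sum_congr rfl fun σ _ => ?_
        rw [card_isAdmissible, Nat.cast_prod]
        rfl
    _ = ∑ σ, ∑ F : Fin p → Fin m → Bool, if IsAdmissible h a b σ F then ε σ else 0 := by
        refine sum_congr rfl fun σ _ => ?_
        rw [Fintype.card_subtype, natCast_card_filter, mul_sum]
        simp only [mul_ite, mul_one, mul_zero]
    _ = ∑ x ∈ univ.filter (fun x : Equiv.Perm (Fin p) × (Fin p → Fin m → Bool) =>
            IsAdmissible h a b x.1 x.2 ∧ Intersects a x.2), ε x.1 +
          Fintype.card {F : Fin p → Fin m → Bool // IsAdmissible h a b 1 F ∧ ¬ Intersects a F} := by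
        simp only [hsplit, sum_add_distrib, hnonint, sum_filter, ← Fintype.sum_prod_type']
    _ = _ := by rw [sum_sign_intersecting_eq_zero, zero_add]

end Lindstrom

section Melon

variable {m : ℕ}

def positions (a : ℤ) (s : Fin m → Bool) (t : Fin (m + 1)) : ℤ := a + walk s t

lemma positions_succ_sub (a : ℤ) (s : Fin m → Bool) (k : Fin m) :
    positions a s k.succ - positions a s k.castSucc = if s k then 1 else -1 := by
  simp [positions, walk_succ, stepAt]

lemma positions_injective (a : ℤ) : Function.Injective (positions (m := m) a) := by
  intro s s' hss'
  funext k
  have hk := positions_succ_sub a s k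
  rw [hss', positions_succ_sub] at hk
  revert hk; cases s k <;> cases s' k <;> simp

lemma exists_positions_eq {a : ℤ} {f : Fin (m + 1) → ℤ} (h0 : f 0 = a)
    (hstep : ∀ k : Fin m, f k.succ - f k.castSucc = 1 ∨ f k.succ - f k.castSucc = -1) :
    ∃ s, positions a s = f := by
  refine ⟨fun k => decide (f k.succ - f k.castSucc = 1), funext fun t => ?_⟩
  induction t using Fin.induction with
  | zero => simp [positions, h0]
  | succ k ih =>
    have hk := positions_succ_sub a (fun k => decide (f k.succ - f k.castSucc = 1)) k
    rcases hstep k with h | h <;> simp only [h, decide_true, decide_eq_true_eq] at hk <;>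
      norm_num at hk <;> linarith

def melonOf {p n : ℕ} (F : Fin p → Fin (2 * n) → Bool) : Fin p → Fin (2 * n + 1) → ℤ :=
  fun i => positions (2 * (i : ℤ)) (F i)

lemma melonHeight_lt_iff {p n : ℕ} (hp : 0 < p) (y : Fin p → Fin (2 * n + 1) → ℤ) (c : ℤ) :
    melonHeight y < c ↔ ∀ i t, y i t < c := by
  have : NeZero p := ⟨hp.ne'⟩
  have hrange : {v | ∃ i t, y i t = v} =
      Set.range fun it : Fin p × Fin (2 * n + 1) => y it.1 it.2 := by
    ext; simp
  rw [melonHeight, hrange, (Set.finite_range _).csSup_lt_iff (Set.range_nonempty _)]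
  simp only [Set.forall_mem_range, Prod.forall]

lemma isMelon_melonOf_iff {p n : ℕ} (hp : 0 < p) (h : ℤ) (F : Fin p → Fin (2 * n) → Bool) :
    IsMelon p n (melonOf F) ∧ melonHeight (melonOf F) < h ↔
      IsAdmissible h (fun i : Fin p => 2 * (i : ℤ)) (fun i => 2 * (i : ℤ)) 1 F ∧
        ¬ Intersects (fun i : Fin p => 2 * (i : ℤ)) F := by
  have hstart : ∀ i, melonOf F i 0 = 2 * (i : ℤ) := by simp [melonOf, positions]
  have hstep : ∀ i (k : Fin (2 * n)), melonOf F i k.succ - melonOf F i k.castSucc = 1 ∨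
      melonOf F i k.succ - melonOf F i k.castSucc = -1 := by
    intro i k; rw [melonOf, positions_succ_sub]; cases F i k <;> simp
  rw [melonHeight_lt_iff hp]
  constructor
  · rintro ⟨⟨-, hend, -, hdisj⟩, hbelow⟩
    exact ⟨fun k => ⟨hend k, fun t ht => hbelow k ⟨t, by omega⟩⟩,
      fun ⟨t, ht, ij, hne, heq⟩ => hdisj _ _ hne ⟨t, by omega⟩ heq⟩
  · rintro ⟨hadm, hnint⟩
    exact ⟨⟨hstart, fun i => (hadm i).1, hstep, fun i j hij t heq =>
      hnint ⟨t, by omega, (i, j), hij, heq⟩⟩, fun i t => (hadm i).2 t (by omega)⟩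

lemma card_melons_eq_card_nonintersecting {p n : ℕ} (hp : 0 < p) (h : ℤ) :
    Nat.card {y : Fin p → Fin (2 * n + 1) → ℤ // IsMelon p n y ∧ melonHeight y < h} =
      Nat.card {F : Fin p → Fin (2 * n) → Bool //
        IsAdmissible h (fun i : Fin p => 2 * (i : ℤ)) (fun i => 2 * (i : ℤ)) 1 F ∧
          ¬ Intersects (fun i : Fin p => 2 * (i : ℤ)) F} := by
  refine (Nat.card_congr (Equiv.ofBijective
    (fun F => ⟨melonOf F.1, (isMelon_melonOf_iff hp h F.1).2 F.2⟩) ⟨?_, ?_⟩)).symm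
  · intro F G hFG
    exact Subtype.ext <| funext fun i =>
      positions_injective _ (congrFun (congrArg Subtype.val hFG) i)
  · rintro ⟨y, hy, hheight⟩
    choose F hF using fun i => exists_positions_eq (hy.1 i) (hy.2.2.1 i)
    have hFy : melonOf F = y := funext hF
    exact ⟨⟨F, (isMelon_melonOf_iff hp h F).1 (hFy ▸ ⟨hy, hheight⟩)⟩, Subtype.ext hFy⟩

lemma card_melons_eq_zero {p n : ℕ} (hp : 0 < p) {h : ℤ} (hh : h ≤ 2 * (p - 1 : ℕ)) :
    Nat.card {y : Fin p → Fin (2 * n + 1) → ℤ // IsMelon p n y ∧ melonHeight y < h} = 0 := by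
  refine @Nat.card_of_isEmpty _ ⟨fun ⟨y, hy, hheight⟩ => ?_⟩
  have htop := (melonHeight_lt_iff hp y h).1 hheight ⟨p - 1, by omega⟩ 0
  rw [hy.1, Fin.val_mk] at htop
  omega

end Melon

theorem det_of_sub_reflect_eq_zero {R : Type*} [CommRing R] {p : ℕ} (f : ℤ → Fin p → R) (c : ℤ)
    {i j : Fin p} (hij : (i : ℤ) + j = c) :
    (Matrix.of fun (k l : Fin p) => f k l - f (c - k) l).det = 0 := by
  rcases eq_or_ne i j with rfl | hne
  · exact Matrix.det_eq_zero_of_row_eq_zero i fun l => by simp [show c - i = i by omega]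
  · rw [← Matrix.det_updateRow_add_self _ hne]
    refine Matrix.det_eq_zero_of_row_eq_zero i fun l => ?_
    simp [show c - i = j by omega, show c - j = i by omega]

end Watermelon

open Watermelon

theorem stmt2 (p n h : ℕ) (hp : 0 < p) :
    (Nat.card {y : Fin p → Fin (2*n+1) → ℤ //
        IsMelon p n y ∧ melonHeight y < (h : ℤ)} : ℤ) =
      Matrix.det (Matrix.of fun i j : Fin p =>
        (ichoose (2*n) ((n : ℤ) + (i : ℤ) - (j : ℤ)) : ℤ)
          - (ichoose (2*n) ((n : ℤ) + (h : ℤ) - (i : ℤ) - (j : ℤ)) : ℤ)) := by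
  classical
  rcases lt_or_ge (2 * (p - 1)) h with hph | hph
  · have hmono : StrictMono fun i : Fin p => 2 * (i : ℤ) := fun i j hij => by
      simpa using Fin.lt_def.1 hij
    have hpar : ∀ i j : Fin p, 2 * (i : ℤ) ≡ 2 * (j : ℤ) [ZMOD 2] := fun i j => by
      simp [Int.ModEq]
    rw [card_melons_eq_card_nonintersecting hp, Nat.card_eq_fintype_card,
      ← det_pathCountBelow h hmono hpar hmono]
    congr 1
    ext i j
    rw [Matrix.of_apply, Matrix.of_apply,
      pathCountBelow_eq_ichoose_sub (by have := i.isLt; omega) (by have := j.isLt; omega)]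
  · rw [card_melons_eq_zero hp (by exact_mod_cast hph), Nat.cast_zero, eq_comm]
    convert det_of_sub_reflect_eq_zero (fun r (l : Fin p) => (ichoose (2 * n) (n + r - l) : ℤ)) h
      (i := ⟨h / 2, by omega⟩) (j := ⟨h - h / 2, by omega⟩) (by push_cast; omega) using 2
    ext k l
    simp only [Matrix.of_apply]
    ring_nf
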